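/- Suppose η > 0 satisfies η‖u^(t) − m^(t)‖_{*,x^(t)} ≤ 1/2 and η‖m^(t)‖_{*,g^(t−1)} ≤ 1/2 for all t ∈ [T]. Then for every t ∈ [T], ‖x^(t) − g^(t)‖_{x^(t)} ≤ 2η‖u^(t) − m^(t)‖_{*,x^(t)} and ‖x^(t) − g^(t−1)‖_{g^(t−1)} ≤ 2η‖m^(t)‖_{*,g^(t−1)}. -/

import Mathlib

open Finset Matrix

/-- The quadratic form `v ⬝ M v` associated to a matrix `M`. -/
noncomputable def quadForm {d : ℕ} (M : Matrix (Fin d) (Fin d) ℝ) (v : Fin d → ℝ) : ℝ :=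
  v ⬝ᵥ M.mulVec v

/-- The primal local norm `‖v‖_x = √(vᵀ ∇²ℛ(x) v)` (here `M = ∇²ℛ(x)`). -/
noncomputable def locNorm {d : ℕ} (M : Matrix (Fin d) (Fin d) ℝ) (v : Fin d → ℝ) : ℝ :=
  Real.sqrt (quadForm M v)

/-- The dual local norm `‖v‖_{*,x} = √(vᵀ (∇²ℛ(x))⁻¹ v)` (here `M = ∇²ℛ(x)`). -/
noncomputable def dualNorm {d : ℕ} (M : Matrix (Fin d) (Fin d) ℝ) (v : Fin d → ℝ) : ℝ :=
  Real.sqrt (quadForm M⁻¹ v)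

/-- `ω(s) = s − log(1+s)`. -/
noncomputable def omegaFn (s : ℝ) : ℝ := s - Real.log (1 + s)

lemma quadForm_pos {d : ℕ} {M : Matrix (Fin d) (Fin d) ℝ} (hM : M.PosDef)
    {v : Fin d → ℝ} (hv : v ≠ 0) : 0 < quadForm M v := by
  have := hM.dotProduct_mulVec_pos hv
  simpa [quadForm, star_trivial] using this

lemma quadForm_nonneg {d : ℕ} {M : Matrix (Fin d) (Fin d) ℝ} (hM : M.PosDef)
    (v : Fin d → ℝ) : 0 ≤ quadForm M v := by
  rcases eq_or_ne v 0 with rfl | hv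
  · simp [quadForm]
  · exact (quadForm_pos hM hv).le

lemma quadForm_neg {d : ℕ} (M : Matrix (Fin d) (Fin d) ℝ) (v : Fin d → ℝ) :
    quadForm M (-v) = quadForm M v := by
  simp [quadForm, Matrix.mulVec_neg]

lemma quadForm_smul {d : ℕ} (M : Matrix (Fin d) (Fin d) ℝ) (c : ℝ) (v : Fin d → ℝ) :
    quadForm M (c • v) = c ^ 2 * quadForm M v := by
  simp [quadForm, mulVec_smul, smul_dotProduct, dotProduct_smul]
  ring

lemma locNorm_nonneg {d : ℕ} (M : Matrix (Fin d) (Fin d) ℝ) (v : Fin d → ℝ) :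
    0 ≤ locNorm M v := Real.sqrt_nonneg _

lemma dualNorm_nonneg {d : ℕ} (M : Matrix (Fin d) (Fin d) ℝ) (v : Fin d → ℝ) :
    0 ≤ dualNorm M v := Real.sqrt_nonneg _

lemma locNorm_neg {d : ℕ} (M : Matrix (Fin d) (Fin d) ℝ) (v : Fin d → ℝ) :
    locNorm M (-v) = locNorm M v := by rw [locNorm, quadForm_neg]; rfl

lemma dualNorm_smul {d : ℕ} (M : Matrix (Fin d) (Fin d) ℝ) {c : ℝ} (hc : 0 ≤ c) (v : Fin d → ℝ) :
    dualNorm M (c • v) = c * dualNorm M v := by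
  rw [dualNorm, quadForm_smul, Real.sqrt_mul (sq_nonneg c), Real.sqrt_sq hc]; rfl

lemma symm_mulVec_dot {d : ℕ} {M : Matrix (Fin d) (Fin d) ℝ} (hsymm : Mᵀ = M)
    (y z : Fin d → ℝ) : (M *ᵥ y) ⬝ᵥ z = y ⬝ᵥ (M *ᵥ z) := by
  rw [dotProduct_comm, dotProduct_mulVec, ← Matrix.vecMul_transpose, hsymm,
    dotProduct_comm]

lemma posdef_symm {d : ℕ} {M : Matrix (Fin d) (Fin d) ℝ} (hM : M.PosDef) : Mᵀ = M := by
  have := hM.isHermitian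
  rwa [Matrix.IsHermitian, Matrix.conjTranspose_eq_transpose_of_trivial] at this

lemma dual_cauchy_schwarz {d : ℕ} {M : Matrix (Fin d) (Fin d) ℝ} (hM : M.PosDef)
    (w h : Fin d → ℝ) : w ⬝ᵥ h ≤ dualNorm M w * locNorm M h := by
  have hMinv : M⁻¹.PosDef := hM.inv
  have hA : 0 ≤ quadForm M⁻¹ w := quadForm_nonneg hMinv w
  have hdet : IsUnit M.det := hM.det_pos.ne'.isUnit
  have key : (w ⬝ᵥ h) ^ 2 ≤ quadForm M⁻¹ w * quadForm M h := by
    rcases eq_or_ne h 0 with rfl | hne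
    · simp [quadForm]
    · have hCpos : 0 < quadForm M h := quadForm_pos hM hne
      have hq : ∀ t : ℝ, 0 ≤ quadForm M h * (t * t) + (2 * (w ⬝ᵥ h)) * t + quadForm M⁻¹ w := by
        intro t
        have h0 : 0 ≤ quadForm M⁻¹ (w + t • (M *ᵥ h)) := quadForm_nonneg hMinv _
        have e1 : M⁻¹ *ᵥ (M *ᵥ h) = h := by
          rw [mulVec_mulVec, Matrix.nonsing_inv_mul M hdet, one_mulVec]
        have e2 : (M *ᵥ h) ⬝ᵥ (M⁻¹ *ᵥ w) = w ⬝ᵥ h := by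
          rw [symm_mulVec_dot (posdef_symm hM), mulVec_mulVec,
            Matrix.mul_nonsing_inv M hdet, one_mulVec, dotProduct_comm]
        have e3 : (M *ᵥ h) ⬝ᵥ h = quadForm M h := by
          rw [symm_mulVec_dot (posdef_symm hM)]; rfl
        have expand : quadForm M⁻¹ (w + t • (M *ᵥ h))
            = quadForm M h * (t * t) + (2 * (w ⬝ᵥ h)) * t + quadForm M⁻¹ w := by
          simp only [quadForm, mulVec_add, mulVec_smul, e1, add_dotProduct,
            dotProduct_add, smul_dotProduct, dotProduct_smul, smul_eq_mul, e2, e3]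
          ring
        linarith [expand ▸ h0]
      have hd := discrim_le_zero hq
      rw [discrim] at hd
      nlinarith [hd]
  calc w ⬝ᵥ h ≤ |w ⬝ᵥ h| := le_abs_self _
    _ = Real.sqrt ((w ⬝ᵥ h) ^ 2) := (Real.sqrt_sq_eq_abs _).symm
    _ ≤ Real.sqrt (quadForm M⁻¹ w * quadForm M h) := Real.sqrt_le_sqrt key
    _ = dualNorm M w * locNorm M h := by rw [Real.sqrt_mul hA]; rfl

lemma key_stability {d : ℕ} {U : Set (Fin d → ℝ)} (hUo : IsOpen U) (hUc : Convex ℝ U)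
    {R : (Fin d → ℝ) → ℝ} (hR : ∀ y ∈ U, ContDiffAt ℝ 3 R y)
    {H : (Fin d → ℝ) → Matrix (Fin d) (Fin d) ℝ}
    (hH : ∀ y ∈ U, ∀ v w' : Fin d → ℝ, fderiv ℝ (fderiv ℝ R) y v w' = v ⬝ᵥ (H y) *ᵥ w')
    (hSC : ∀ y ∈ U, ∀ v : Fin d → ℝ,
      |fderiv ℝ (fderiv ℝ (fderiv ℝ R)) y v v v| ≤ 2 * (locNorm (H y) v) ^ 3)
    (hPD : ∀ y ∈ U, (H y).PosDef)
    {a b : Fin d → ℝ} (ha : a ∈ U) (hb : b ∈ U)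
    {w : Fin d → ℝ}
    (hgrad : ∀ v, fderiv ℝ R b v - fderiv ℝ R a v = w ⬝ᵥ v)
    (hw : dualNorm (H a) w ≤ 1 / 2) :
    locNorm (H a) (b - a) ≤ 2 * dualNorm (H a) w := by
  classical
  set h : Fin d → ℝ := b - a with hhdef
  by_cases hh : h = 0
  · rw [hh]
    have : locNorm (H a) 0 = 0 := by simp [locNorm, quadForm]
    rw [this]
    have := dualNorm_nonneg (H a) w
    linarith
  -- setup
  set p : ℝ → (Fin d → ℝ) := fun s => a + s • h with hpdef
  have hp : ∀ s ∈ Set.Icc (0:ℝ) 1, p s ∈ U := by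
    intro s hs
    have heq : p s = (1 - s) • a + s • b := by
      simp only [hpdef, hhdef]; module
    rw [heq]
    exact hUc ha hb (by linarith [hs.2]) hs.1 (by ring)
  have p0 : p 0 = a := by simp [hpdef]
  have p1 : p 1 = b := by simp [hpdef, hhdef]
  set F1 := fderiv ℝ R with hF1
  set F2 := fderiv ℝ F1 with hF2
  set F3 := fderiv ℝ F2 with hF3
  have hC2 : ∀ y ∈ U, ContDiffAt ℝ 2 F1 y := fun y hy => (hR y hy).fderiv_right (by norm_num)
  have hC1 : ∀ y ∈ U, ContDiffAt ℝ 1 F2 y := fun y hy => (hC2 y hy).fderiv_right (by norm_num)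
  have hasF2 : ∀ y ∈ U, HasFDerivAt F1 (F2 y) y := fun y hy =>
    ((hC2 y hy).differentiableAt (by norm_num)).hasFDerivAt
  have hasF3 : ∀ y ∈ U, HasFDerivAt F2 (F3 y) y := fun y hy =>
    ((hC1 y hy).differentiableAt (by norm_num)).hasFDerivAt
  have hasp : ∀ s : ℝ, HasDerivAt p h s := by
    intro s
    simpa [hpdef] using ((hasDerivAt_id s).smul_const h).const_add a
  set D : ℝ → ℝ := fun s => F1 (p s) h with hDdef
  set φ : ℝ → ℝ := fun s => F2 (p s) h h with hφdef
  set φ' : ℝ → ℝ := fun s => F3 (p s) h h h with hφ'def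
  have hD' : ∀ s ∈ Set.Icc (0:ℝ) 1, HasDerivAt D (φ s) s := by
    intro s hs
    have h2 : HasDerivAt (fun t => F1 (p t)) (F2 (p s) h) s :=
      (hasF2 _ (hp s hs)).comp_hasDerivAt s (hasp s)
    have h3 := ((ContinuousLinearMap.apply ℝ ℝ h).hasFDerivAt).comp_hasDerivAt s h2
    exact h3
  have hφD : ∀ s ∈ Set.Icc (0:ℝ) 1, HasDerivAt φ (φ' s) s := by
    intro s hs
    have h1 : HasDerivAt (fun t => F2 (p t)) (F3 (p s) h) s := by
      have := HasFDerivAt.comp_hasDerivAt (E := (Fin d → ℝ) →L[ℝ] (Fin d → ℝ) →L[ℝ] ℝ) s (hasF3 _ (hp s hs)) (hasp s); exact this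
    have h2 := ((ContinuousLinearMap.apply ℝ ((Fin d → ℝ) →L[ℝ] ℝ) h).hasFDerivAt).comp_hasDerivAt (F := (Fin d → ℝ) →L[ℝ] (Fin d → ℝ) →L[ℝ] ℝ) s h1
    have h3 := ((ContinuousLinearMap.apply ℝ ℝ h).hasFDerivAt).comp_hasDerivAt s h2
    exact h3
  have hφ_eq : ∀ s ∈ Set.Icc (0:ℝ) 1, φ s = quadForm (H (p s)) h := by
    intro s hs
    simpa [hφdef, quadForm] using hH _ (hp s hs) h h
  have hφpos : ∀ s ∈ Set.Icc (0:ℝ) 1, 0 < φ s := by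
    intro s hs
    rw [hφ_eq s hs]
    exact quadForm_pos (hPD _ (hp s hs)) hh
  have hφbound : ∀ s ∈ Set.Icc (0:ℝ) 1, |φ' s| ≤ 2 * (φ s * Real.sqrt (φ s)) := by
    intro s hs
    have h1 := hSC _ (hp s hs) h
    have h2 : locNorm (H (p s)) h = Real.sqrt (φ s) := by rw [hφ_eq s hs]; rfl
    rw [h2] at h1
    have h3 : Real.sqrt (φ s) ^ 3 = φ s * Real.sqrt (φ s) := by
      rw [pow_succ, Real.sq_sqrt (hφpos s hs).le]
    rw [h3] at h1
    exact h1
  -- inverse-sqrt function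
  set ψ : ℝ → ℝ := fun s => (Real.sqrt (φ s))⁻¹ with hψdef
  set ψ' : ℝ → ℝ := fun s => -(φ' s / (2 * Real.sqrt (φ s))) / (Real.sqrt (φ s)) ^ 2 with hψ'def
  have hψD : ∀ s ∈ Set.Icc (0:ℝ) 1, HasDerivAt ψ (ψ' s) s := by
    intro s hs
    exact ((hφD s hs).sqrt (hφpos s hs).ne').inv
      (Real.sqrt_ne_zero'.mpr (hφpos s hs))
  have hψbound : ∀ s ∈ Set.Icc (0:ℝ) 1, ‖ψ' s‖ ≤ 1 := by
    intro s hs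
    have hq : 0 < Real.sqrt (φ s) := Real.sqrt_pos.mpr (hφpos s hs)
    have hsq : Real.sqrt (φ s) ^ 2 = φ s := Real.sq_sqrt (hφpos s hs).le
    have hpos : 0 < 2 * (φ s * Real.sqrt (φ s)) :=
      mul_pos two_pos (mul_pos (hφpos s hs) hq)
    have e : ψ' s = -φ' s / (2 * (φ s * Real.sqrt (φ s))) := by
      simp only [hψ'def]
      rw [show (2:ℝ) * (φ s * Real.sqrt (φ s)) = 2 * Real.sqrt (φ s) * Real.sqrt (φ s) ^ 2 by
        rw [hsq]; ring]
      ring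
    rw [Real.norm_eq_abs, e, abs_div, abs_neg, abs_of_pos hpos, div_le_one hpos]
    exact hφbound s hs
  have hmono : ∀ s ∈ Set.Icc (0:ℝ) 1, ψ s ≤ ψ 0 + s := by
    intro s hs
    have := Convex.norm_image_sub_le_of_norm_hasDerivWithin_le
      (fun y hy => (hψD y hy).hasDerivWithinAt) hψbound (convex_Icc 0 1)
      (Set.left_mem_Icc.mpr zero_le_one) hs
    rw [one_mul, Real.norm_eq_abs, Real.norm_eq_abs, sub_zero, abs_of_nonneg hs.1] at this
    have h2 := (abs_le.mp this).2
    linarith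
  set r : ℝ := Real.sqrt (quadForm (H a) h) with hrdef
  have hrpos : 0 < r := Real.sqrt_pos.mpr (quadForm_pos (hPD a ha) hh)
  have hφ0 : φ 0 = quadForm (H a) h := by
    rw [hφ_eq 0 (Set.left_mem_Icc.mpr zero_le_one), p0]
  have hψ0 : ψ 0 = r⁻¹ := by
    simp only [hψdef]
    rw [hφ0, hrdef]
  have hφlower : ∀ s ∈ Set.Icc (0:ℝ) 1, r ^ 2 / (1 + r * s) ^ 2 ≤ φ s := by
    intro s hs
    have hq : 0 < Real.sqrt (φ s) := Real.sqrt_pos.mpr (hφpos s hs)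
    have hrs : 0 < 1 + r * s := by
      have : 0 ≤ r * s := mul_nonneg hrpos.le hs.1
      linarith
    have h1 : (Real.sqrt (φ s))⁻¹ ≤ (1 + r * s) / r := by
      have := hmono s hs
      rw [hψ0] at this
      have heq : r⁻¹ + s = (1 + r * s) / r := by field_simp
      rw [hψdef] at this
      calc (Real.sqrt (φ s))⁻¹ ≤ r⁻¹ + s := this
        _ = (1 + r * s) / r := heq
    have h2 : r / (1 + r * s) ≤ Real.sqrt (φ s) := by
      rw [div_le_iff₀ hrs]
      have h3 : 1 / Real.sqrt (φ s) ≤ (1 + r * s) / r := by rwa [one_div]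
      rw [div_le_div_iff₀ hq hrpos] at h3
      linarith
    calc r ^ 2 / (1 + r * s) ^ 2 = (r / (1 + r * s)) ^ 2 := by rw [div_pow]
      _ ≤ Real.sqrt (φ s) ^ 2 := by
          apply pow_le_pow_left₀ (div_nonneg hrpos.le hrs.le) h2
      _ = φ s := Real.sq_sqrt (hφpos s hs).le
  -- comparison function A
  set A : ℝ → ℝ := fun s => r - r / (1 + r * s) with hAdef
  have hA' : ∀ s ∈ Set.Icc (0:ℝ) 1, HasDerivAt A (r ^ 2 / (1 + r * s) ^ 2) s := by
    intro s hs
    have hrs : 0 < 1 + r * s := by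
      have : 0 ≤ r * s := mul_nonneg hrpos.le hs.1
      linarith
    have h1 : HasDerivAt (fun t : ℝ => 1 + r * t) r s := by
      simpa using ((hasDerivAt_id s).const_mul r).const_add 1
    have h2 : HasDerivAt (fun t : ℝ => (1 + r * t)⁻¹) (-r / (1 + r * s) ^ 2) s :=
      h1.inv hrs.ne'
    have h3 := (h2.const_mul r).const_sub r
    have heq : r - r * (1 + r * s)⁻¹ = A s := by rw [hAdef]; simp [div_eq_mul_inv]
    have : HasDerivAt (fun t => r - r * (1 + r * t)⁻¹) (-(r * (-r / (1 + r * s) ^ 2))) s := h3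
    have hfun : (fun t => r - r * (1 + r * t)⁻¹) = A := by
      funext t; rw [hAdef]; simp [div_eq_mul_inv]
    rw [hfun] at this
    convert this using 1
    field_simp
  -- monotonicity of D - A
  set W : ℝ → ℝ := fun s => D s - A s with hWdef
  have hWmono : MonotoneOn W (Set.Icc (0:ℝ) 1) := by
    apply monotoneOn_of_deriv_nonneg (convex_Icc 0 1)
    · intro s hs
      exact ((hD' s hs).sub (hA' s hs)).continuousAt.continuousWithinAt
    · intro s hs
      rw [interior_Icc] at hs
      have hs' : s ∈ Set.Icc (0:ℝ) 1 := Set.Ioo_subset_Icc_self hs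
      exact (((hD' s hs').sub (hA' s hs')).differentiableAt).differentiableWithinAt
    · intro s hs
      rw [interior_Icc] at hs
      have hs' : s ∈ Set.Icc (0:ℝ) 1 := Set.Ioo_subset_Icc_self hs
      rw [show W = D - A from rfl, ((hD' s hs').sub (hA' s hs')).deriv]
      have := hφlower s hs'
      linarith
  have hW01 : W 0 ≤ W 1 :=
    hWmono (Set.left_mem_Icc.mpr zero_le_one) (Set.right_mem_Icc.mpr zero_le_one) zero_le_one
  have hA0 : A 0 = 0 := by rw [hAdef]; simp
  have hA1 : A 1 = r - r / (1 + r) := by rw [hAdef]; simp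
  have hDdiff : D 1 - D 0 = w ⬝ᵥ h := by
    rw [hDdef]; simp only [p0, p1]
    exact hgrad h
  have hstep : r - r / (1 + r) ≤ w ⬝ᵥ h := by
    have : W 0 = D 0 - 0 := by simp only [hWdef]; rw [hA0]
    have h2 : W 1 = D 1 - (r - r / (1 + r)) := by simp only [hWdef]; rw [hA1]
    rw [this, h2] at hW01
    linarith [hDdiff]
  have hCS : w ⬝ᵥ h ≤ dualNorm (H a) w * locNorm (H a) h := dual_cauchy_schwarz (hPD a ha) w h
  have hlocr : locNorm (H a) h = r := rfl
  set lam : ℝ := dualNorm (H a) w with hlam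
  have h1r : 0 < 1 + r := by linarith
  have hfinal : r - r / (1 + r) ≤ lam * r := by
    rw [hlocr] at hCS
    linarith [hstep]
  -- conclude r ≤ 2 * lam
  have hkey : r / (1 + r) * r ≤ lam * r := by
    have : r - r / (1 + r) = r / (1 + r) * r := by field_simp; ring
    linarith [this ▸ hfinal]
  have hrr : r / (1 + r) ≤ lam := by
    have := (mul_le_mul_iff_of_pos_right hrpos).mp hkey
    exact this
  show locNorm (H a) h ≤ 2 * lam
  rw [hlocr]
  rw [div_le_iff₀ h1r] at hrr
  have hml := mul_le_mul_of_nonneg_right hw hrpos.le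
  have hexp : lam * (1 + r) = lam + lam * r := by ring
  rw [hexp] at hrr
  linarith
lemma foc {d : ℕ} {U : Set (Fin d → ℝ)} (hU : IsOpen U) {R : (Fin d → ℝ) → ℝ}
    {z : Fin d → ℝ} (hz : z ∈ U) (hR : DifferentiableAt ℝ R z)
    (η : ℝ) (c : Fin d → ℝ)
    (hmax : IsMaxOn (fun y => η * (y ⬝ᵥ c) - R y) U z) :
    ∀ v, fderiv ℝ R z v = η * (v ⬝ᵥ c) := by
  classical
  set L : (Fin d → ℝ) →L[ℝ] ℝ := LinearMap.toContinuousLinearMap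
    { toFun := fun y => y ⬝ᵥ c
      map_add' := fun y₁ y₂ => add_dotProduct y₁ y₂ c
      map_smul' := fun r y => smul_dotProduct r y c } with hLdef
  have hLz : HasFDerivAt (fun y : Fin d → ℝ => y ⬝ᵥ c) L z := L.hasFDerivAt
  have hf : HasFDerivAt (fun y => η * (y ⬝ᵥ c) - R y) (η • L - fderiv ℝ R z) z :=
    (hLz.const_mul η).sub hR.hasFDerivAt
  have h0 : η • L - fderiv ℝ R z = 0 :=
    (hmax.isLocalMax (hU.mem_nhds hz)).hasFDerivAt_eq_zero hf
  intro v
  have h1 : (η • L - fderiv ℝ R z) v = 0 := by rw [h0]; rfl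
  simp only [ContinuousLinearMap.sub_apply, ContinuousLinearMap.smul_apply,
    smul_eq_mul] at h1
  have h2 : L v = v ⬝ᵥ c := rfl
  rw [h2] at h1
  linarith

/-- stability of the OFTRL and be-the-leader iterates under a
nondegenerate self-concordant regularizer `ℛ` (with Hessian `H`). -/
theorem oftrl_selfconcordant_stability
    (d T : ℕ) (X : Set (Fin d → ℝ))
    (hXne : X.Nonempty) (hXconv : Convex ℝ X) (hXcomp : IsCompact X)
    (hXint : (interior X).Nonempty)
    (R : (Fin d → ℝ) → ℝ)
    (hRconv : ConvexOn ℝ (interior X) R)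
    (hRsmooth : ContDiffOn ℝ 3 R (interior X))
    (H : (Fin d → ℝ) → Matrix (Fin d) (Fin d) ℝ)
    -- `H x` is the Hessian `∇²ℛ(x)` of `ℛ` at `x`:
    (hH : ∀ x ∈ interior X, ∀ v w : Fin d → ℝ,
      iteratedFDeriv ℝ 2 R x ![v, w] = v ⬝ᵥ (H x).mulVec w)
    -- self-concordance differential inequality:
    (hSC : ∀ x ∈ interior X, ∀ v : Fin d → ℝ,
      |iteratedFDeriv ℝ 3 R x ![v, v, v]| ≤ 2 * (locNorm (H x) v) ^ 3)
    -- barrier property: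
    (hBarrier : ∀ z ∈ frontier X, ∀ s : ℕ → Fin d → ℝ,
      (∀ k, s k ∈ interior X) → Filter.Tendsto s Filter.atTop (nhds z) →
      Filter.Tendsto (fun k => R (s k)) Filter.atTop Filter.atTop)
    -- nondegeneracy:
    (hPD : ∀ x ∈ interior X, (H x).PosDef)
    (η : ℝ) (hη : 0 < η)
    (u m : ℕ → Fin d → ℝ)
    (x g : ℕ → Fin d → ℝ)
    -- `x 0 = g 0 = argmin ℛ`, and `ℛ` is normalized so that `min ℛ = 0`:
    (hx0 : x 0 ∈ interior X) (hg0 : g 0 = x 0)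
    (hmin : ∀ y ∈ interior X, R (x 0) ≤ R y)
    (hnorm : R (x 0) = 0)
    -- OFTRL iterates:
    (hx : ∀ t ∈ Finset.Icc 1 T, x t ∈ interior X ∧
      IsMaxOn (fun y => η * (y ⬝ᵥ (m t + ∑ τ ∈ Finset.Icc 1 (t - 1), u τ)) - R y)
        (interior X) (x t))
    -- be-the-leader iterates:
    (hg : ∀ t ∈ Finset.Icc 1 T, g t ∈ interior X ∧
      IsMaxOn (fun y => η * (y ⬝ᵥ ∑ τ ∈ Finset.Icc 1 t, u τ) - R y)
        (interior X) (g t))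
    -- step-size conditions:
    (hcond1 : ∀ t ∈ Finset.Icc 1 T, η * dualNorm (H (x t)) (u t - m t) ≤ 1 / 2)
    (hcond2 : ∀ t ∈ Finset.Icc 1 T, η * dualNorm (H (g (t - 1))) (m t) ≤ 1 / 2) :
    ∀ t ∈ Finset.Icc 1 T,
      locNorm (H (x t)) (x t - g t) ≤ 2 * η * dualNorm (H (x t)) (u t - m t)
      ∧ locNorm (H (g (t - 1))) (x t - g (t - 1))
          ≤ 2 * η * dualNorm (H (g (t - 1))) (m t) := by
  intro t ht
  obtain ⟨ht1, htT⟩ := Finset.mem_Icc.mp ht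
  obtain ⟨n, rfl⟩ : ∃ n, t = n + 1 := ⟨t - 1, by omega⟩
  have hUo : IsOpen (interior X) := isOpen_interior
  have hUc : Convex ℝ (interior X) := hXconv.interior
  have hRat : ∀ y ∈ interior X, ContDiffAt ℝ 3 R y := fun y hy =>
    hRsmooth.contDiffAt (hUo.mem_nhds hy)
  have hdiff : ∀ y ∈ interior X, DifferentiableAt ℝ R y := fun y hy =>
    (hRat y hy).differentiableAt (by norm_num)
  have hH' : ∀ y ∈ interior X, ∀ v w' : Fin d → ℝ,
      fderiv ℝ (fderiv ℝ R) y v w' = v ⬝ᵥ (H y) *ᵥ w' := by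
    intro y hy v w'
    have h1 := hH y hy v w'
    rw [iteratedFDeriv_two_apply] at h1
    simpa using h1
  have hSC' : ∀ y ∈ interior X, ∀ v : Fin d → ℝ,
      |fderiv ℝ (fderiv ℝ (fderiv ℝ R)) y v v v| ≤ 2 * (locNorm (H y) v) ^ 3 := by
    intro y hy v
    have h1 := hSC y hy v
    have h2 : iteratedFDeriv ℝ 3 R y ![v, v, v]
        = fderiv ℝ (fderiv ℝ (fderiv ℝ R)) y v v v := by
      rw [iteratedFDeriv_succ_apply_right, iteratedFDeriv_two_apply]
      simp [Fin.init, Fin.last]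
    rwa [h2] at h1
  -- first-order conditions
  have hxmem : x (n + 1) ∈ interior X := (hx _ ht).1
  have hgmem : g (n + 1) ∈ interior X := (hg _ ht).1
  have hfoc_x : ∀ v, fderiv ℝ R (x (n + 1)) v
      = η * (v ⬝ᵥ (m (n + 1) + ∑ τ ∈ Finset.Icc 1 n, u τ)) := by
    have := foc hUo hxmem (hdiff _ hxmem) η _ (hx _ ht).2
    simpa using this
  have hfoc_g : ∀ v, fderiv ℝ R (g (n + 1)) v
      = η * (v ⬝ᵥ ∑ τ ∈ Finset.Icc 1 (n + 1), u τ) :=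
    foc hUo hgmem (hdiff _ hgmem) η _ (hg _ ht).2
  have hgprev_mem : g n ∈ interior X := by
    rcases Nat.eq_zero_or_pos n with rfl | hn
    · rw [hg0]; exact hx0
    · exact (hg n (Finset.mem_Icc.mpr ⟨hn, by omega⟩)).1
  have hfoc_gprev : ∀ v, fderiv ℝ R (g n) v
      = η * (v ⬝ᵥ ∑ τ ∈ Finset.Icc 1 n, u τ) := by
    rcases Nat.eq_zero_or_pos n with rfl | hn
    · have hIcc : Finset.Icc 1 0 = (∅ : Finset ℕ) := by decide
      have hmax0 : IsMaxOn (fun y => η * (y ⬝ᵥ ∑ τ ∈ Finset.Icc 1 0, u τ) - R y)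
          (interior X) (g 0) := by
        apply isMaxOn_iff.mpr
        intro y hy
        simp only [hIcc, Finset.sum_empty, dotProduct_zero, mul_zero, zero_sub, hg0]
        have := hmin y hy
        linarith
      exact foc hUo hgprev_mem (hdiff _ hgprev_mem) η _ hmax0
    · exact foc hUo hgprev_mem (hdiff _ hgprev_mem) η _
        (hg n (Finset.mem_Icc.mpr ⟨hn, by omega⟩)).2
  have hsum : ∑ τ ∈ Finset.Icc 1 (n + 1), u τ = (∑ τ ∈ Finset.Icc 1 n, u τ) + u (n + 1) :=
    Finset.sum_Icc_succ_top (by omega) u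
  constructor
  · -- part 1 : x t vs g t, local norm at x t
    have hres := key_stability hUo hUc hRat hH' hSC' hPD hxmem hgmem
      (w := η • (u (n + 1) - m (n + 1)))
      (by
        intro v
        rw [hfoc_g v, hfoc_x v, hsum]
        rw [smul_dotProduct, sub_dotProduct, dotProduct_comm (u (n+1)) v,
          dotProduct_comm (m (n+1)) v]
        simp only [dotProduct_add, smul_eq_mul]
        ring)
      (by
        rw [dualNorm_smul _ hη.le]
        exact hcond1 _ ht)
    have hneg : locNorm (H (x (n+1))) (x (n+1) - g (n+1))
        = locNorm (H (x (n+1))) (g (n+1) - x (n+1)) := by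
      rw [← locNorm_neg, neg_sub]
    rw [hneg]
    calc locNorm (H (x (n+1))) (g (n+1) - x (n+1))
        ≤ 2 * dualNorm (H (x (n+1))) (η • (u (n+1) - m (n+1))) := hres
      _ = 2 * η * dualNorm (H (x (n+1))) (u (n+1) - m (n+1)) := by
          rw [dualNorm_smul _ hη.le]; ring
  · -- part 2 : x t vs g (t-1), local norm at g (t-1)
    have hres := key_stability hUo hUc hRat hH' hSC' hPD hgprev_mem hxmem
      (w := η • m (n + 1))
      (by
        intro v
        rw [hfoc_x v, hfoc_gprev v]
        rw [smul_dotProduct, dotProduct_comm (m (n+1)) v]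
        simp only [dotProduct_add, smul_eq_mul]
        ring)
      (by
        rw [dualNorm_smul _ hη.le]
        have := hcond2 _ ht
        simpa using this)
    have hn1 : n + 1 - 1 = n := by omega
    rw [hn1]
    calc locNorm (H (g n)) (x (n+1) - g n)
        ≤ 2 * dualNorm (H (g n)) (η • m (n+1)) := hres
      _ = 2 * η * dualNorm (H (g n)) (m (n+1)) := by
          rw [dualNorm_smul _ hη.le]; ring
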